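/- arXiv:1512.07020 — 2 statements merged into one kernel-verified Lean document; each statement's English description precedes it below -/
import Mathlib

section
/- Let Φ be a reduced root system and M a ℤ-module. For every n ≥ 1, the coboundary dⁿ maps symmetric cochains to symmetric cochains and antisymmetric cochains to antisymmetric cochains: if ρ̂ⁿωⁿ = ωⁿ then ρ̂ⁿ⁺¹(dⁿωⁿ) = dⁿωⁿ, and if ρ̂ⁿωⁿ = −ωⁿ then ρ̂ⁿ⁺¹(dⁿωⁿ) = −dⁿωⁿ. -/
/-!
Reversing an `(n+1)`-tuple reverses the list of its faces in `∂ⁿ` (the tail and the initial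
segment swap, the `j`-th contraction becomes the `(n-1-j)`-th), so `dⁿ` commutes with reversal up
to the sign `(-1)^(n+1)`. As `κ_{n+1} = κₙ + (n+1)`, this sign is absorbed and `ρ̂ⁿ⁺¹ ∘ dⁿ = dⁿ ∘ ρ̂ⁿ`.
The faces of a chain in `T_{n+1}(Φ)` lie in `T_n(Φ)`, so on such a chain `dⁿ(ρ̂ⁿω)` only sees
`ρ̂ⁿω` on `T_n(Φ)`, where it equals `±ω`.
-/

open scoped RealInnerProductSpace

/-- A reduced root system `Φ` in a real inner product space `V`:
a finite set of nonzero vectors spanning `V`, closed under the reflections it determines,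
with integral Cartan numbers, such that the only multiples of a root in `Φ` are `±α`. -/
structure ReducedRootSystem (V : Type) [NormedAddCommGroup V] [InnerProductSpace ℝ V] :
    Type where
  roots : Set V
  finite : roots.Finite
  nonzero : ∀ α ∈ roots, α ≠ 0
  spans : Submodule.span ℝ roots = ⊤
  reflect_mem : ∀ α ∈ roots, ∀ β ∈ roots, β - (2 * ⟪β, α⟫ / ⟪α, α⟫) • α ∈ roots
  integral : ∀ α ∈ roots, ∀ β ∈ roots, ∃ n : ℤ, 2 * ⟪β, α⟫ / ⟪α, α⟫ = (n : ℝ)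
  reduced : ∀ α ∈ roots, ∀ t : ℝ, t • α ∈ roots → t = 1 ∨ t = -1

variable {V : Type} [NormedAddCommGroup V] [InnerProductSpace ℝ V]

/-- `Φ₀ = Φ ∪ {0}`. -/
def rootsZero (Φ : ReducedRootSystem V) : Set V := insert 0 Φ.roots

/-- Contraction of a tuple at position `j` (adding the `j`-th and `(j+1)`-st entries). -/
def contractAt (l : List V) (j : ℕ) : List V :=
  l.take j ++ (l.getD j 0 + l.getD (j + 1) 0) :: l.drop (j + 2)

/-- `IsRootChainAux Φ n l`: the tuple `l` of length `n` is a generator of `T_n(Φ)`: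
`T₁(Φ) = Φ₀`, and an `n`-tuple with entries in `Φ₀` lies in `T_n(Φ)` iff all its
contractions lie in `T_{n-1}(Φ)`. -/
def IsRootChainAux (Φ : ReducedRootSystem V) : ℕ → List V → Prop
  | 0, _ => False
  | 1, l => ∃ r ∈ rootsZero Φ, l = [r]
  | n + 2, l => l.length = n + 2 ∧ (∀ r ∈ l, r ∈ rootsZero Φ) ∧
      ∀ j, j + 1 < l.length → IsRootChainAux Φ (n + 1) (contractAt l j)

/-- `l` is a generator of `T_{l.length}(Φ)`. -/
def IsRootChain (Φ : ReducedRootSystem V) (l : List V) : Prop := IsRootChainAux Φ l.length l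

open Classical in
/-- Evaluation of a cochain on a chain generator: tuples containing `0` are identified with
the zero chain `0ₙ`, on which any cochain vanishes. -/
noncomputable def chainEv {M : Type} [Zero M] (ω : List V → M) (l : List V) : M :=
  if (0 : V) ∈ l then 0 else ω l

/-- The coboundary operator `dⁿ` on cochains, `dⁿωⁿ(r₀|⋯|rₙ) = ωⁿ(∂ⁿ[r₀|⋯|rₙ])`. -/
noncomputable def cobd {M : Type} [AddCommGroup M] (ω : List V → M) (l : List V) : M :=
  chainEv ω l.tail
    + (∑ j ∈ Finset.range (l.length - 1), ((-1 : ℤ) ^ (j + 1)) • chainEv ω (contractAt l j))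
    - ((-1 : ℤ) ^ (l.length - 1)) • chainEv ω l.dropLast

/-- `κₙ = C(n+1,2) + 1`. -/
def kappa (n : ℕ) : ℕ := Nat.choose (n + 1) 2 + 1

/-- The signed reversal operator `ρ̂ⁿ` on `n`-cochains: `(ρ̂ⁿω)(φ) = (-1)^{κₙ} ω(ρⁿφ)`. -/
noncomputable def rhoHat {M : Type} [AddCommGroup M] (n : ℕ) (ω : List V → M)
    (l : List V) : M :=
  ((-1 : ℤ) ^ kappa n) • ω l.reverse

section Lists

omit [InnerProductSpace ℝ V]

theorem length_contractAt {l : List V} {j : ℕ} (hj : j + 1 < l.length) :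
    (contractAt l j).length = l.length - 1 := by
  simp only [contractAt, List.length_append, List.length_take, List.length_cons,
    List.length_drop]
  omega

theorem tail_contractAt_succ (a : V) (l : List V) (j : ℕ) :
    (contractAt (a :: l) (j + 1)).tail = contractAt l j := by
  simp [contractAt]

theorem contractAt_reverse {l : List V} {j : ℕ} (hj : j + 1 < l.length) :
    contractAt l.reverse j = (contractAt l (l.length - 2 - j)).reverse := by
  unfold contractAt
  rw [List.reverse_append, List.reverse_cons, List.append_assoc, List.singleton_append,
    List.reverse_drop, List.reverse_take, List.getD_reverse _ (by omega),
    List.getD_reverse _ (by omega), add_comm]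
  congr 3 <;> first | omega | (congr 1; omega)

end Lists

theorem isRootChain_singleton {Φ : ReducedRootSystem V} {r : V} :
    IsRootChain Φ [r] ↔ r ∈ rootsZero Φ := by
  simp [IsRootChain, IsRootChainAux]

theorem isRootChain_iff {Φ : ReducedRootSystem V} {l : List V} (hl : 2 ≤ l.length) :
    IsRootChain Φ l ↔ (∀ r ∈ l, r ∈ rootsZero Φ) ∧
      ∀ j, j + 1 < l.length → IsRootChain Φ (contractAt l j) := by
  obtain ⟨k, hk⟩ : ∃ k, l.length = k + 2 := ⟨l.length - 2, by omega⟩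
  have hc : ∀ j, j + 1 < l.length → (contractAt l j).length = k + 1 := fun j hj => by
    rw [length_contractAt hj]; omega
  simp +contextual only [IsRootChain, hk, IsRootChainAux, true_and, hc]

namespace IsRootChain

variable {Φ : ReducedRootSystem V} {l : List V}

theorem contractAt (h : IsRootChain Φ l) {j : ℕ} (hj : j + 1 < l.length) :
    IsRootChain Φ (_root_.contractAt l j) :=
  ((isRootChain_iff (by omega)).1 h).2 j hj

theorem mem_rootsZero (h : IsRootChain Φ l) {r : V} (hr : r ∈ l) : r ∈ rootsZero Φ := by
  rcases l with _ | ⟨a, _ | ⟨b, t⟩⟩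
  · simp at hr
  · rw [List.mem_singleton.1 hr]; exact isRootChain_singleton.1 h
  · exact ((isRootChain_iff (by simp)).1 h).1 r hr

theorem tail (h : IsRootChain Φ l) (hl : 2 ≤ l.length) : IsRootChain Φ l.tail := by
  obtain ⟨k, hk⟩ : ∃ k, l.length = k + 2 := ⟨l.length - 2, by omega⟩
  induction k generalizing l with
  | zero =>
    obtain ⟨a, b, rfl⟩ := List.length_eq_two.1 hk
    exact isRootChain_singleton.2 (h.mem_rootsZero (by simp))
  | succ k ih =>
    obtain ⟨a, t, rfl⟩ := List.exists_cons_of_length_eq_add_one hk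
    simp only [List.length_cons, add_left_inj] at hk
    rw [List.tail_cons]
    refine (isRootChain_iff (by omega)).2
      ⟨fun r hr => h.mem_rootsZero (List.mem_cons_of_mem a hr), fun j hj => ?_⟩
    have hc : (_root_.contractAt (a :: t) (j + 1)).length = k + 2 := by
      rw [length_contractAt (by simp; omega)]; simp [hk]
    rw [← tail_contractAt_succ a]
    exact ih (h.contractAt (by simp; omega)) (by omega) hc

theorem reverse (h : IsRootChain Φ l) : IsRootChain Φ l.reverse := by
  obtain ⟨k, hk⟩ : ∃ k, l.length = k + 1 := by
    rcases l with _ | ⟨a, t⟩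
    · simp [IsRootChain, IsRootChainAux] at h
    · exact ⟨t.length, rfl⟩
  induction k generalizing l with
  | zero =>
    obtain ⟨a, rfl⟩ := List.length_eq_one_iff.1 hk
    simpa using h
  | succ k ih =>
    refine (isRootChain_iff (by simp; omega)).2 ⟨fun r hr => h.mem_rootsZero
      (List.mem_reverse.1 hr), fun j hj => ?_⟩
    rw [List.length_reverse] at hj
    rw [contractAt_reverse hj]
    exact ih (h.contractAt (by omega)) (by rw [length_contractAt (by omega)]; omega)

theorem dropLast (h : IsRootChain Φ l) (hl : 2 ≤ l.length) : IsRootChain Φ l.dropLast := by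
  simpa using (h.reverse.tail (by simpa using hl)).reverse

end IsRootChain

section Cochains

omit [InnerProductSpace ℝ V]

variable {M : Type} [AddCommGroup M]

theorem chainEv_smul (c : ℤ) (ω : List V → M) (l : List V) :
    chainEv (c • ω) l = c • chainEv ω l := by
  unfold chainEv
  split_ifs <;> simp

theorem chainEv_comp_reverse (ω : List V → M) (l : List V) :
    chainEv (fun m => ω m.reverse) l = chainEv ω l.reverse := by
  unfold chainEv
  split_ifs <;> simp_all

theorem cobd_smul (c : ℤ) (ω : List V → M) (l : List V) :
    cobd (c • ω) l = c • cobd ω l := by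
  simp only [cobd, chainEv_smul, smul_sub, smul_add, Finset.smul_sum, smul_comm c]

theorem neg_one_pow_sub_eq_mul {i N : ℕ} (hi : i ≤ N) :
    (-1 : ℤ) ^ (N - i) = (-1) ^ (N + 1) * (-1) ^ (i + 1) := by
  obtain ⟨d, rfl⟩ := Nat.exists_eq_add_of_le hi
  rw [Nat.add_sub_cancel_left, ← pow_add, show i + d + 1 + (i + 1) = d + 2 * (i + 1) by ring,
    pow_add, pow_mul, neg_one_sq, one_pow, mul_one]

theorem cobd_reverse (ω : List V → M) (l : List V) :
    cobd ω l.reverse = (-1 : ℤ) ^ l.length • cobd (fun m => ω m.reverse) l := by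
  obtain rfl | ⟨N, hN⟩ : l = [] ∨ ∃ N, l.length = N + 1 := by
    rcases l with _ | ⟨a, t⟩
    · exact .inl rfl
    · exact .inr ⟨t.length, rfl⟩
  · simp [cobd]
  have hsum : ∑ j ∈ Finset.range N, (-1 : ℤ) ^ (j + 1) • chainEv ω (contractAt l.reverse j)
      = (-1 : ℤ) ^ (N + 1) • ∑ j ∈ Finset.range N,
          (-1 : ℤ) ^ (j + 1) • chainEv (fun m => ω m.reverse) (contractAt l j) := by
    rw [← Finset.sum_range_reflect, Finset.smul_sum]
    refine Finset.sum_congr rfl fun j hj => ?_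
    rw [Finset.mem_range] at hj
    rw [contractAt_reverse (by omega), show l.length - 2 - (N - 1 - j) = j by omega,
      chainEv_comp_reverse, smul_smul, show N - 1 - j + 1 = N - j by omega,
      neg_one_pow_sub_eq_mul hj.le]
  unfold cobd
  rw [List.length_reverse, hN, Nat.add_sub_cancel, hsum, List.tail_reverse,
    List.dropLast_reverse, chainEv_comp_reverse, chainEv_comp_reverse, pow_succ]
  match_scalars <;> ring_nf
  rw [pow_mul', neg_one_sq, one_pow]

theorem kappa_succ (n : ℕ) : kappa (n + 1) = kappa n + (n + 1) := by
  have h : (n + 1 + 1).choose 2 = (n + 1).choose 1 + (n + 1).choose 2 :=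
    Nat.choose_succ_succ' (n + 1) 1
  rw [Nat.choose_one_right] at h
  unfold kappa
  omega

theorem rhoHat_succ_cobd (n : ℕ) (ω : List V → M) {l : List V} (hl : l.length = n + 1) :
    rhoHat (n + 1) (cobd ω) l = cobd (rhoHat n ω) l := by
  have hsign : (-1 : ℤ) ^ kappa (n + 1) * (-1) ^ (n + 1) = (-1) ^ kappa n := by
    rw [kappa_succ, pow_add, mul_assoc, ← pow_add, ← two_mul, pow_mul, neg_one_sq, one_pow,
      mul_one]
  change _ = cobd ((-1 : ℤ) ^ kappa n • fun m => ω m.reverse) l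
  rw [rhoHat, cobd_reverse, hl, smul_smul, hsign, cobd_smul]

end Cochains

section RootChainCochains

variable {Φ : ReducedRootSystem V} {M : Type} [AddCommGroup M] {n : ℕ}

theorem cobd_congr_of_chainEv_eq (hn : 1 ≤ n) {ω ω' : List V → M}
    (h : ∀ m : List V, m.length = n → IsRootChain Φ m → chainEv ω m = chainEv ω' m)
    {l : List V} (hl : l.length = n + 1) (hc : IsRootChain Φ l) :
    cobd ω l = cobd ω' l := by
  unfold cobd
  rw [h _ (by simp [hl]) (hc.tail (by omega)), h _ (by simp [hl]) (hc.dropLast (by omega))]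
  congr 2
  refine Finset.sum_congr rfl fun j hj => ?_
  rw [Finset.mem_range] at hj
  rw [h _ (by rw [length_contractAt (by omega)]; omega) (hc.contractAt (by omega))]

theorem chainEv_rhoHat_cobd_eq_smul (hn : 1 ≤ n) {ω : List V → M} (ε : ℤ)
    (h : ∀ m : List V, m.length = n → IsRootChain Φ m →
      chainEv (rhoHat n ω) m = ε • chainEv ω m)
    {l : List V} (hl : l.length = n + 1) (hc : IsRootChain Φ l) :
    chainEv (rhoHat (n + 1) (cobd ω)) l = ε • chainEv (cobd ω) l := by
  have key : rhoHat (n + 1) (cobd ω) l = ε • cobd ω l := calc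
    rhoHat (n + 1) (cobd ω) l = cobd (rhoHat n ω) l := rhoHat_succ_cobd n ω hl
    _ = cobd (ε • ω) l :=
      cobd_congr_of_chainEv_eq hn (fun m hm hcm => by rw [h m hm hcm, chainEv_smul]) hl hc
    _ = ε • cobd ω l := cobd_smul ε ω l
  unfold chainEv
  split_ifs
  · exact (smul_zero ε).symm
  · exact key

end RootChainCochains

theorem coboundary_preserves_reversal_symmetry_general
    {V : Type} [NormedAddCommGroup V] [InnerProductSpace ℝ V]
    (Φ : ReducedRootSystem V) (M : Type) [AddCommGroup M] (n : ℕ) (hn : 1 ≤ n)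
    (ω : List V → M) :
    ((∀ l : List V, l.length = n → IsRootChain Φ l →
          chainEv (rhoHat n ω) l = chainEv ω l) →
        ∀ l : List V, l.length = n + 1 → IsRootChain Φ l →
          chainEv (rhoHat (n + 1) (cobd ω)) l = chainEv (cobd ω) l) ∧
    ((∀ l : List V, l.length = n → IsRootChain Φ l →
          chainEv (rhoHat n ω) l = - chainEv ω l) →
        ∀ l : List V, l.length = n + 1 → IsRootChain Φ l →
          chainEv (rhoHat (n + 1) (cobd ω)) l = - chainEv (cobd ω) l) := by
  refine ⟨fun h l hl hc => ?_, fun h l hl hc => ?_⟩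
  · simpa using chainEv_rhoHat_cobd_eq_smul hn (ω := ω) 1 (by simpa using h) hl hc
  · simpa using chainEv_rhoHat_cobd_eq_smul hn (ω := ω) (-1) (by simpa using h) hl hc

/-- For every `n ≥ 1` the coboundary `dⁿ` maps symmetric cochains to
symmetric cochains and antisymmetric cochains to antisymmetric cochains.  (Equalities of
cochains are equalities of the induced forms on `C_n(Φ)`, i.e. on all chains.) -/
theorem coboundary_preserves_reversal_symmetry
    {V : Type} [NormedAddCommGroup V] [InnerProductSpace ℝ V] [FiniteDimensional ℝ V]
    (Φ : ReducedRootSystem V) (M : Type) [AddCommGroup M] (n : ℕ) (hn : 1 ≤ n)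
    (ω : List V → M) :
    ((∀ l : List V, l.length = n → IsRootChain Φ l →
          chainEv (rhoHat n ω) l = chainEv ω l) →
        ∀ l : List V, l.length = n + 1 → IsRootChain Φ l →
          chainEv (rhoHat (n + 1) (cobd ω)) l = chainEv (cobd ω) l) ∧
    ((∀ l : List V, l.length = n → IsRootChain Φ l →
          chainEv (rhoHat n ω) l = - chainEv ω l) →
        ∀ l : List V, l.length = n + 1 → IsRootChain Φ l →
          chainEv (rhoHat (n + 1) (cobd ω)) l = - chainEv (cobd ω) l) :=
  coboundary_preserves_reversal_symmetry_general Φ M n hn ω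
end

section
/- Let Φ be a reduced root system with positive roots Φ⁺ and simple roots Δ. If β, β′ ∈ Φ are roots whose sum β + β′ is a positive root that is not simple, then there exists a simple root α ∈ Δ such that β + β′ − α is a root, and moreover at least one of β − α and β′ − α is a root or zero. -/
open scoped RealInnerProductSpace

variable {V : Type} [NormedAddCommGroup V] [InnerProductSpace ℝ V]

/-- The positive roots with respect to a linear functional `f` (nonvanishing on `Φ`). -/
def posRoots (Φ : ReducedRootSystem V) (f : V →ₗ[ℝ] ℝ) : Set V :=
  {α | α ∈ Φ.roots ∧ 0 < f α}

/-- The simple roots: positive roots that are not the sum of two positive roots. -/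
def simpleRoots (Φ : ReducedRootSystem V) (f : V →ₗ[ℝ] ℝ) : Set V :=
  {α | α ∈ posRoots Φ f ∧ ¬ ∃ β ∈ posRoots Φ f, ∃ γ ∈ posRoots Φ f, α = β + γ}


/-!
Every positive root is a sum of simple roots, so a positive root `γ` has `0 < ⟪γ, α⟫` for some
simple root `α`. The difference of two roots with positive inner product is a root or zero. Apply
this to `γ = β + β'` (where `γ - α ≠ 0` because `γ` is not simple), and to whichever of `β`, `β'`
has positive inner product with `α`: one of them does, since their inner products sum to `⟪γ, α⟫`.
-/

namespace ReducedRootSystem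

variable (Φ : ReducedRootSystem V)

lemma exists_int_two_inner_eq {α β : V} (hα : α ∈ Φ.roots) (hβ : β ∈ Φ.roots) :
    ∃ n : ℤ, 2 * ⟪β, α⟫ = n * ⟪α, α⟫ := by
  obtain ⟨n, hn⟩ := Φ.integral α hα β hβ
  have hαα : ⟪α, α⟫ ≠ 0 := (real_inner_self_pos.mpr (Φ.nonzero α hα)).ne'
  exact ⟨n, by rw [← hn, div_mul_cancel₀ _ hαα]⟩

lemma neg_mem {α : V} (hα : α ∈ Φ.roots) : -α ∈ Φ.roots := by
  have hαα : ⟪α, α⟫ ≠ 0 := (real_inner_self_pos.mpr (Φ.nonzero α hα)).ne'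
  have h := Φ.reflect_mem α hα α hα
  rwa [mul_div_assoc, div_self hαα, mul_one, two_smul, sub_add_cancel_left] at h

lemma sub_mem_of_two_inner_eq {α β : V} (hα : α ∈ Φ.roots) (hβ : β ∈ Φ.roots)
    (h : 2 * ⟪β, α⟫ = ⟪α, α⟫) : β - α ∈ Φ.roots := by
  have hαα : ⟪α, α⟫ ≠ 0 := (real_inner_self_pos.mpr (Φ.nonzero α hα)).ne'
  have hrefl := Φ.reflect_mem α hα β hβ
  rwa [h, div_self hαα, one_smul] at hrefl

/-- If both Cartan integers are at least `2`, then `‖β - α‖² = ⟪β, β⟫ - 2⟪β, α⟫ + ⟪α, α⟫ ≤ 0`;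
otherwise one of the two reflections `s_α β`, `s_β α` is `±(β - α)`. -/
lemma sub_mem_rootsZero_of_inner_pos {α β : V} (hα : α ∈ Φ.roots) (hβ : β ∈ Φ.roots)
    (h : 0 < ⟪β, α⟫) : β - α ∈ rootsZero Φ := by
  obtain ⟨n, hn⟩ := Φ.exists_int_two_inner_eq hα hβ
  obtain ⟨m, hm⟩ := Φ.exists_int_two_inner_eq hβ hα
  rw [real_inner_comm] at hm
  have hαα : 0 < ⟪α, α⟫ := real_inner_self_pos.mpr (Φ.nonzero α hα)
  have hββ : 0 < ⟪β, β⟫ := real_inner_self_pos.mpr (Φ.nonzero β hβ)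
  have hn_pos : (0 : ℝ) < n := pos_of_mul_pos_left (hn ▸ by positivity) hαα.le
  have hm_pos : (0 : ℝ) < m := pos_of_mul_pos_left (hm ▸ by positivity) hββ.le
  obtain rfl | hn_two : n = 1 ∨ 2 ≤ n := by
    have : 0 < n := by exact_mod_cast hn_pos
    omega
  · exact Set.mem_insert_of_mem _ (Φ.sub_mem_of_two_inner_eq hα hβ (by simpa using hn))
  obtain rfl | hm_two : m = 1 ∨ 2 ≤ m := by
    have : 0 < m := by exact_mod_cast hm_pos
    omega
  · have hαβ := Φ.sub_mem_of_two_inner_eq hβ hα (by rw [real_inner_comm]; simpa using hm)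
    exact Set.mem_insert_of_mem _ (by simpa using Φ.neg_mem hαβ)
  have hn_two' : (2 : ℝ) ≤ n := by exact_mod_cast hn_two
  have hm_two' : (2 : ℝ) ≤ m := by exact_mod_cast hm_two
  have hnorm : ⟪β - α, β - α⟫ ≤ 0 := by
    rw [real_inner_sub_sub_self]
    nlinarith
  left
  exact real_inner_self_nonpos.mp hnorm

variable (f : V →ₗ[ℝ] ℝ)

lemma mem_closure_simpleRoots {γ : V} (hγ : γ ∈ posRoots Φ f) :
    γ ∈ AddSubmonoid.closure (simpleRoots Φ f) := by
  have hwf : (posRoots Φ f).WellFoundedOn (fun x y => f x < f y) :=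
    Set.wellFoundedOn_image.mp ((Φ.finite.subset fun _ hx => hx.1).image f).wellFoundedOn
  refine hwf.induction hγ fun γ hγ ih => ?_
  by_cases hs : γ ∈ simpleRoots Φ f
  · exact AddSubmonoid.subset_closure hs
  obtain ⟨δ, hδ, ε, hε, rfl⟩ : ∃ δ ∈ posRoots Φ f, ∃ ε ∈ posRoots Φ f, γ = δ + ε :=
    not_not.mp fun h => hs ⟨hγ, h⟩
  have hδε : f (δ + ε) = f δ + f ε := map_add f δ ε
  exact add_mem (ih δ hδ (by linarith [hε.2])) (ih ε hε (by linarith [hδ.2]))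

lemma exists_simpleRoots_inner_pos {γ : V} (hγ : γ ∈ posRoots Φ f) :
    ∃ α ∈ simpleRoots Φ f, 0 < ⟪γ, α⟫ := by
  by_contra! h
  have hle : ∀ x ∈ AddSubmonoid.closure (simpleRoots Φ f), ⟪γ, x⟫ ≤ 0 := fun x hx => by
    induction hx using AddSubmonoid.closure_induction with
    | mem α hα => exact h α hα
    | zero => simp
    | add x y _ _ hx hy => rw [inner_add_right]; linarith
  exact Φ.nonzero γ hγ.1 (real_inner_self_nonpos.mp (hle γ (Φ.mem_closure_simpleRoots f hγ)))

end ReducedRootSystem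

theorem subtract_simple_root_from_sum_and_summand_general
    {V : Type} [NormedAddCommGroup V] [InnerProductSpace ℝ V]
    (Φ : ReducedRootSystem V) (f : V →ₗ[ℝ] ℝ)
    (β β' : V) (hβ : β ∈ Φ.roots) (hβ' : β' ∈ Φ.roots)
    (hsum : β + β' ∈ posRoots Φ f) (hns : β + β' ∉ simpleRoots Φ f) :
    ∃ α ∈ simpleRoots Φ f, β + β' - α ∈ Φ.roots ∧
      (β - α ∈ rootsZero Φ ∨ β' - α ∈ rootsZero Φ) := by
  obtain ⟨α, hαs, hpos⟩ := Φ.exists_simpleRoots_inner_pos f hsum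
  have hα : α ∈ Φ.roots := hαs.1.1
  refine ⟨α, hαs, ?_, ?_⟩
  · rcases Φ.sub_mem_rootsZero_of_inner_pos hα hsum.1 hpos with hzero | hroot
    · exact absurd (sub_eq_zero.mp hzero ▸ hαs) hns
    · exact hroot
  · have hsummand : 0 < ⟪β, α⟫ ∨ 0 < ⟪β', α⟫ := by
      by_contra! h
      rw [inner_add_left] at hpos
      linarith
    exact hsummand.imp (Φ.sub_mem_rootsZero_of_inner_pos hα hβ)
      (Φ.sub_mem_rootsZero_of_inner_pos hα hβ')

/-- If two roots `β, β'` add up to a positive root that is not simple,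
then there is a simple root `α` such that `β + β' - α` is a root and at least one of
`β - α`, `β' - α` is a root or zero. -/
theorem subtract_simple_root_from_sum_and_summand
    {V : Type} [NormedAddCommGroup V] [InnerProductSpace ℝ V] [FiniteDimensional ℝ V]
    (Φ : ReducedRootSystem V) (f : V →ₗ[ℝ] ℝ) (hf : ∀ α ∈ Φ.roots, f α ≠ 0)
    (β β' : V) (hβ : β ∈ Φ.roots) (hβ' : β' ∈ Φ.roots)
    (hsum : β + β' ∈ posRoots Φ f) (hns : β + β' ∉ simpleRoots Φ f) :
    ∃ α ∈ simpleRoots Φ f, β + β' - α ∈ Φ.roots ∧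
      (β - α ∈ rootsZero Φ ∨ β' - α ∈ rootsZero Φ) :=
  subtract_simple_root_from_sum_and_summand_general Φ f β β' hβ hβ' hsum hns
end
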